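/- If a representation Z satisfies the conditional independence Z ⟂ A given D, and separately Y ⟂ A given D, and additionally Y ⟂ X given (D, A) with Z = φ(X), then Y ⟂ A given Z provided Z is a sufficient statistic for D, i.e., D ⟂ A given Z. -/
import Mathlib


open Classical in
/-- Probability of an event under a weight function on a finite sample space. -/
noncomputable def Pr {Ω : Type*} [Fintype Ω] (w : Ω → ℝ) (p : Ω → Prop) : ℝ :=
  ∑ ω, if p ω then w ω else 0

/-- `U ⟂ V | W`: conditional independence of two random variables given a third. -/
def CondIndep {Ω α β γ : Type*} [Fintype Ω] (w : Ω → ℝ)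
    (U : Ω → α) (V : Ω → β) (W : Ω → γ) : Prop :=
  ∀ u v c, 0 < Pr w (fun ω => W ω = c) →
    Pr w (fun ω => U ω = u ∧ V ω = v ∧ W ω = c) / Pr w (fun ω => W ω = c)
      = (Pr w (fun ω => U ω = u ∧ W ω = c) / Pr w (fun ω => W ω = c))
        * (Pr w (fun ω => V ω = v ∧ W ω = c) / Pr w (fun ω => W ω = c))

lemma Pr_nonneg {Ω : Type*} [Fintype Ω] (w : Ω → ℝ) (hw : ∀ ω, 0 ≤ w ω) (p : Ω → Prop) :
    0 ≤ Pr w p := by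
  unfold Pr
  refine Finset.sum_nonneg fun ω _ => ?_
  split_ifs
  · exact hw ω
  · exact le_refl 0

lemma Pr_congr {Ω : Type*} [Fintype Ω] (w : Ω → ℝ) (p q : Ω → Prop) (h : ∀ ω, p ω ↔ q ω) :
    Pr w p = Pr w q := by
  unfold Pr
  refine Finset.sum_congr rfl fun ω _ => ?_
  classical
  exact if_congr (h ω) rfl rfl

lemma Pr_false_of {Ω : Type*} [Fintype Ω] (w : Ω → ℝ) (p : Ω → Prop) (h : ∀ ω, ¬ p ω) :
    Pr w p = 0 := by
  unfold Pr
  exact Finset.sum_eq_zero fun ω _ => if_neg (h ω)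

lemma Pr_le {Ω : Type*} [Fintype Ω] (w : Ω → ℝ) (hw : ∀ ω, 0 ≤ w ω) (p q : Ω → Prop)
    (hpq : ∀ ω, p ω → q ω) : Pr w p ≤ Pr w q := by
  unfold Pr
  refine Finset.sum_le_sum fun ω _ => ?_
  split_ifs with h1 h2
  · exact le_refl _
  · exact absurd (hpq ω h1) h2
  · exact hw ω
  · exact le_refl 0

lemma Pr_zero_of {Ω : Type*} [Fintype Ω] (w : Ω → ℝ) (hw : ∀ ω, 0 ≤ w ω) (p q : Ω → Prop)
    (hpq : ∀ ω, p ω → q ω) (hq : Pr w q = 0) : Pr w p = 0 :=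
  le_antisymm (hq ▸ Pr_le w hw p q hpq) (Pr_nonneg w hw p)

lemma Pr_partition {Ω τ : Type*} [Fintype Ω] [DecidableEq τ] (w : Ω → ℝ) (F : Ω → τ)
    (p : Ω → Prop) :
    Pr w p = ∑ t ∈ Finset.univ.image F, Pr w (fun ω => p ω ∧ F ω = t) := by
  unfold Pr
  rw [Finset.sum_comm]
  refine Finset.sum_congr rfl fun ω _ => ?_
  by_cases hp : p ω
  · simp only [hp, true_and, if_true]
    rw [Finset.sum_ite_eq]
    simp [Finset.mem_image_of_mem]
  · simp [hp]

lemma condIndep_mul {Ω α β γ : Type*} [Fintype Ω] (w : Ω → ℝ) (hw : ∀ ω, 0 ≤ w ω)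
    {U : Ω → α} {V : Ω → β} {W : Ω → γ} (h : CondIndep w U V W) (u : α) (v : β) (c : γ) :
    Pr w (fun ω => U ω = u ∧ V ω = v ∧ W ω = c) * Pr w (fun ω => W ω = c)
      = Pr w (fun ω => U ω = u ∧ W ω = c) * Pr w (fun ω => V ω = v ∧ W ω = c) := by
  rcases (Pr_nonneg w hw (fun ω => W ω = c)).lt_or_eq with hpos | hzero
  · have h' := h u v c hpos
    have hne : Pr w (fun ω => W ω = c) ≠ 0 := ne_of_gt hpos
    rw [div_mul_div_comm, div_eq_div_iff hne (mul_ne_zero hne hne)] at h'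
    exact mul_right_cancel₀ hne (by linear_combination h')
  · have h0 : Pr w (fun ω => U ω = u ∧ W ω = c) = 0 :=
      Pr_zero_of w hw _ _ (fun ω hω => hω.2) hzero.symm
    rw [← hzero, h0]
    ring

/-- If `Z = φ(X)` satisfies `Z ⟂ A | D`, `Y ⟂ (X,A) | D`, and `D ⟂ A | Z`,
then `Y ⟂ A | Z`. -/
theorem stmt8 {Ω 𝓓 𝓐 𝓧 𝓨 𝓩 : Type*} [Fintype Ω]
    (w : Ω → ℝ) (hw : ∀ ω, 0 ≤ w ω) (hwsum : ∑ ω, w ω = 1)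
    (D : Ω → 𝓓) (A : Ω → 𝓐) (X : Ω → 𝓧) (Y : Ω → 𝓨)
    (φ : 𝓧 → 𝓩) (Z : Ω → 𝓩) (hZ : ∀ ω, Z ω = φ (X ω))
    (h1 : CondIndep w Z A D)
    (h2 : CondIndep w Y (fun ω => (X ω, A ω)) D)
    (h3 : CondIndep w D A Z) :
    CondIndep w Y A Z := by
  classical
  intro y a z hz
  -- the key identity with denominators cleared
  suffices key : Pr w (fun ω => Y ω = y ∧ A ω = a ∧ Z ω = z) * Pr w (fun ω => Z ω = z)
      = Pr w (fun ω => Y ω = y ∧ Z ω = z) * Pr w (fun ω => A ω = a ∧ Z ω = z) by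
    have hne : Pr w (fun ω => Z ω = z) ≠ 0 := ne_of_gt hz
    rw [div_mul_div_comm, div_eq_div_iff hne (mul_ne_zero hne hne)]
    linear_combination Pr w (fun ω => Z ω = z) * key
  -- a consequence of h2: Y ⟂ (Z, q(A)) | D, for any predicate q on 𝓐
  have step : ∀ (q : 𝓐 → Prop) (d : 𝓓),
      Pr w (fun ω => Y ω = y ∧ Z ω = z ∧ q (A ω) ∧ D ω = d) * Pr w (fun ω => D ω = d)
        = Pr w (fun ω => Y ω = y ∧ D ω = d)
            * Pr w (fun ω => Z ω = z ∧ q (A ω) ∧ D ω = d) := by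
    intro q d
    rw [Pr_partition w (fun ω => (X ω, A ω)) (fun ω => Y ω = y ∧ Z ω = z ∧ q (A ω) ∧ D ω = d),
        Pr_partition w (fun ω => (X ω, A ω)) (fun ω => Z ω = z ∧ q (A ω) ∧ D ω = d),
        Finset.sum_mul, Finset.mul_sum]
    refine Finset.sum_congr rfl fun t _ => ?_
    obtain ⟨x, a'⟩ := t
    by_cases hc : φ x = z ∧ q a'
    · have e1 : Pr w (fun ω => (Y ω = y ∧ Z ω = z ∧ q (A ω) ∧ D ω = d) ∧ (X ω, A ω) = (x, a'))
          = Pr w (fun ω => Y ω = y ∧ (X ω, A ω) = (x, a') ∧ D ω = d) := by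
        refine Pr_congr w _ _ fun ω => ?_
        simp only [Prod.mk.injEq]
        constructor
        · rintro ⟨⟨hy, _, _, hd⟩, hx, ha⟩; exact ⟨hy, ⟨hx, ha⟩, hd⟩
        · rintro ⟨hy, ⟨hx, ha⟩, hd⟩
          exact ⟨⟨hy, by rw [hZ ω, hx]; exact hc.1, by rw [ha]; exact hc.2, hd⟩, hx, ha⟩
      have e2 : Pr w (fun ω => (Z ω = z ∧ q (A ω) ∧ D ω = d) ∧ (X ω, A ω) = (x, a'))
          = Pr w (fun ω => (X ω, A ω) = (x, a') ∧ D ω = d) := by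
        refine Pr_congr w _ _ fun ω => ?_
        simp only [Prod.mk.injEq]
        constructor
        · rintro ⟨⟨_, _, hd⟩, hx, ha⟩; exact ⟨⟨hx, ha⟩, hd⟩
        · rintro ⟨⟨hx, ha⟩, hd⟩
          exact ⟨⟨by rw [hZ ω, hx]; exact hc.1, by rw [ha]; exact hc.2, hd⟩, hx, ha⟩
      rw [e1, e2]
      exact condIndep_mul w hw h2 y (x, a') d
    · have e1 : Pr w (fun ω => (Y ω = y ∧ Z ω = z ∧ q (A ω) ∧ D ω = d) ∧ (X ω, A ω) = (x, a'))
          = 0 := by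
        refine Pr_false_of w _ fun ω => ?_
        rintro ⟨⟨_, hz', hq, _⟩, ht⟩
        simp only [Prod.mk.injEq] at ht
        exact hc ⟨by rw [← ht.1, ← hZ ω]; exact hz', by rw [← ht.2]; exact hq⟩
      have e2 : Pr w (fun ω => (Z ω = z ∧ q (A ω) ∧ D ω = d) ∧ (X ω, A ω) = (x, a'))
          = 0 := by
        refine Pr_false_of w _ fun ω => ?_
        rintro ⟨⟨hz', hq, _⟩, ht⟩
        simp only [Prod.mk.injEq] at ht
        exact hc ⟨by rw [← ht.1, ← hZ ω]; exact hz', by rw [← ht.2]; exact hq⟩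
      rw [e1, e2]
      ring
  -- decompose the key identity over values of D
  rw [Pr_partition w D (fun ω => Y ω = y ∧ A ω = a ∧ Z ω = z),
      Pr_partition w D (fun ω => Y ω = y ∧ Z ω = z),
      Finset.sum_mul, Finset.sum_mul]
  refine Finset.sum_congr rfl fun d _ => ?_
  -- canonical forms
  have c1 : Pr w (fun ω => (Y ω = y ∧ A ω = a ∧ Z ω = z) ∧ D ω = d)
      = Pr w (fun ω => Y ω = y ∧ Z ω = z ∧ A ω = a ∧ D ω = d) :=
    Pr_congr w _ _ fun ω => by tauto
  have c2 : Pr w (fun ω => (Y ω = y ∧ Z ω = z) ∧ D ω = d)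
      = Pr w (fun ω => Y ω = y ∧ Z ω = z ∧ True ∧ D ω = d) :=
    Pr_congr w _ _ fun ω => by tauto
  rw [c1, c2]
  have E1 : Pr w (fun ω => Y ω = y ∧ Z ω = z ∧ A ω = a ∧ D ω = d) * Pr w (fun ω => D ω = d)
      = Pr w (fun ω => Y ω = y ∧ D ω = d) * Pr w (fun ω => Z ω = z ∧ A ω = a ∧ D ω = d) :=
    step (fun a' => a' = a) d
  have E2 : Pr w (fun ω => Y ω = y ∧ Z ω = z ∧ True ∧ D ω = d) * Pr w (fun ω => D ω = d)
      = Pr w (fun ω => Y ω = y ∧ D ω = d) * Pr w (fun ω => Z ω = z ∧ True ∧ D ω = d) :=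
    step (fun _ => True) d
  have E4 := condIndep_mul w hw h3 d a z
  have c3 : Pr w (fun ω => D ω = d ∧ A ω = a ∧ Z ω = z)
      = Pr w (fun ω => Z ω = z ∧ A ω = a ∧ D ω = d) :=
    Pr_congr w _ _ fun ω => by tauto
  have c4 : Pr w (fun ω => D ω = d ∧ Z ω = z)
      = Pr w (fun ω => Z ω = z ∧ True ∧ D ω = d) :=
    Pr_congr w _ _ fun ω => by tauto
  rw [c3, c4] at E4
  rcases (Pr_nonneg w hw (fun ω => D ω = d)).lt_or_eq with hd | hd
  · refine mul_right_cancel₀ (ne_of_gt hd) ?_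
    linear_combination Pr w (fun ω => Z ω = z) * E1
      + Pr w (fun ω => Y ω = y ∧ D ω = d) * E4
      - Pr w (fun ω => A ω = a ∧ Z ω = z) * E2
  · have z1 : Pr w (fun ω => Y ω = y ∧ Z ω = z ∧ A ω = a ∧ D ω = d) = 0 :=
      Pr_zero_of w hw _ (fun ω => D ω = d) (fun ω hω => hω.2.2.2) hd.symm
    have z2 : Pr w (fun ω => Y ω = y ∧ Z ω = z ∧ True ∧ D ω = d) = 0 :=
      Pr_zero_of w hw _ (fun ω => D ω = d) (fun ω hω => hω.2.2.2) hd.symm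
    rw [z1, z2]
    ring
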